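/- Let P be a finite connected poset, let I ⊆ P with I ◎ P, and let J ⊆ P \ I. Then J ◎ (P \ I) (for the induced order on P \ I) if and only if J ◎ P. -/

import Mathlib

open scoped Classical

/-- A finite poset on a subset (`carrier`) of an ambient type `α`. -/
structure FinPoset (α : Type*) where
  carrier : Finset α
  le : α → α → Prop
  mem_of_le : ∀ ⦃x y⦄, le x y → x ∈ carrier ∧ y ∈ carrier
  le_refl : ∀ x ∈ carrier, le x x
  le_trans : ∀ ⦃x y z⦄, le x y → le y z → le x z
  le_antisymm : ∀ ⦃x y⦄, le x y → le y x → x = y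

namespace FinPoset

variable {α : Type*} [DecidableEq α]

/-- The strict order `x <_P y`. -/
def lt (P : FinPoset α) (x y : α) : Prop := P.le x y ∧ x ≠ y

/-- `min(P)`: the set of minimal elements of `P`. -/
noncomputable def minSet (P : FinPoset α) : Finset α :=
  P.carrier.filter (fun x => ∀ y, P.le y x → y = x)

/-- Connectivity of a subset `S`, for the graph with edges between comparable pairs. -/
def ConnOn (P : FinPoset α) (S : Set α) : Prop :=
  ∀ x ∈ S, ∀ y ∈ S,
    Relation.ReflTransGen (fun a b => a ∈ S ∧ b ∈ S ∧ (P.le a b ∨ P.le b a)) x y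

/-- A finite poset is connected if it is nonempty and any two elements are linked by a
chain of comparable pairs. -/
def Connected (P : FinPoset α) : Prop :=
  P.carrier.Nonempty ∧ P.ConnOn ↑P.carrier

/-- `I` is a connected component of `S` (for the comparability graph of `P`). -/
def IsCC (P : FinPoset α) (S I : Set α) : Prop :=
  I.Nonempty ∧ I ⊆ S ∧ P.ConnOn I ∧
    ∀ x ∈ I, ∀ y ∈ S, (P.le x y ∨ P.le y x) → y ∈ I

/-- `I_- = {x ∈ P \ I : ∃ y ∈ I, x ≤_P y}`. -/
noncomputable def below (P : FinPoset α) (I : Finset α) : Finset α :=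
  (P.carrier \ I).filter (fun x => ∃ y ∈ I, P.le x y)

/-- `I ◎ P` : `I_-` is a singleton `{w}` with `w ∈ min(P)`, and `I` is a connected
component of `{x ∈ P : w <_P x}`. -/
def Circ (P : FinPoset α) (I : Finset α) : Prop :=
  ∃ w, P.below I = {w} ∧ w ∈ P.minSet ∧
    P.IsCC {x | x ∈ P.carrier ∧ P.lt w x} ↑I

/-- The induced poset on a subset `S`. -/
def restrict (P : FinPoset α) (S : Finset α) : FinPoset α where
  carrier := P.carrier ∩ S
  le x y := P.le x y ∧ x ∈ S ∧ y ∈ S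
  mem_of_le := by
    intro x y h
    rcases P.mem_of_le h.1 with ⟨hx, hy⟩
    exact ⟨Finset.mem_inter.2 ⟨hx, h.2.1⟩, Finset.mem_inter.2 ⟨hy, h.2.2⟩⟩
  le_refl := by
    intro x hx
    rcases Finset.mem_inter.1 hx with ⟨h1, h2⟩
    exact ⟨P.le_refl x h1, h2, h2⟩
  le_trans := by
    rintro x y z ⟨h1, hx, hy⟩ ⟨h2, _, hz⟩
    exact ⟨P.le_trans h1 h2, hx, hz⟩
  le_antisymm := by
    rintro x y ⟨h1, _, _⟩ ⟨h2, _, _⟩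
    exact P.le_antisymm h1 h2

/-- The grafting `P ↘_v Q` of `P` above the vertex `v` of `Q` (auxiliary version, with
the disjointness hypotheses as arguments). -/
def graftAux (P Q : FinPoset α) (v : α) (hd : Disjoint P.carrier Q.carrier)
    (hv : v ∈ Q.carrier) : FinPoset α where
  carrier := P.carrier ∪ Q.carrier
  le x y := P.le x y ∨ Q.le x y ∨ (Q.le x v ∧ y ∈ P.carrier)
  mem_of_le := by
    rintro x y (h | h | ⟨h1, h2⟩)
    · rcases P.mem_of_le h with ⟨hx, hy⟩
      exact ⟨Finset.mem_union_left _ hx, Finset.mem_union_left _ hy⟩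
    · rcases Q.mem_of_le h with ⟨hx, hy⟩
      exact ⟨Finset.mem_union_right _ hx, Finset.mem_union_right _ hy⟩
    · exact ⟨Finset.mem_union_right _ (Q.mem_of_le h1).1, Finset.mem_union_left _ h2⟩
  le_refl := by
    intro x hx
    rcases Finset.mem_union.1 hx with h | h
    · exact Or.inl (P.le_refl x h)
    · exact Or.inr (Or.inl (Q.le_refl x h))
  le_trans := by
    rintro x y z (h1 | h1 | ⟨h1, h1'⟩) (h2 | h2 | ⟨h2, h2'⟩)
    · exact Or.inl (P.le_trans h1 h2)
    · exact absurd (Q.mem_of_le h2).1 (Finset.disjoint_left.1 hd (P.mem_of_le h1).2)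
    · exact absurd (Q.mem_of_le h2).1 (Finset.disjoint_left.1 hd (P.mem_of_le h1).2)
    · exact absurd (P.mem_of_le h2).1 (Finset.disjoint_right.1 hd (Q.mem_of_le h1).2)
    · exact Or.inr (Or.inl (Q.le_trans h1 h2))
    · exact Or.inr (Or.inr ⟨Q.le_trans h1 h2, h2'⟩)
    · exact Or.inr (Or.inr ⟨h1, (P.mem_of_le h2).2⟩)
    · exact absurd (Q.mem_of_le h2).1 (Finset.disjoint_left.1 hd h1')
    · exact absurd (Q.mem_of_le h2).1 (Finset.disjoint_left.1 hd h1')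
  le_antisymm := by
    rintro x y (h1 | h1 | ⟨h1, h1'⟩) (h2 | h2 | ⟨h2, h2'⟩)
    · exact P.le_antisymm h1 h2
    · exact absurd (Q.mem_of_le h2).1 (Finset.disjoint_left.1 hd (P.mem_of_le h1).2)
    · exact absurd (Q.mem_of_le h2).1 (Finset.disjoint_left.1 hd (P.mem_of_le h1).2)
    · exact absurd (P.mem_of_le h2).1 (Finset.disjoint_right.1 hd (Q.mem_of_le h1).2)
    · exact Q.le_antisymm h1 h2
    · exact absurd (Q.mem_of_le h1).1 (Finset.disjoint_left.1 hd h2')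
    · exact absurd (P.mem_of_le h2).2 (Finset.disjoint_right.1 hd (Q.mem_of_le h1).1)
    · exact absurd (Q.mem_of_le h2).1 (Finset.disjoint_left.1 hd h1')
    · exact absurd (Q.mem_of_le h1).1 (Finset.disjoint_left.1 hd h2')
  
/-- The grafting `P ↘_v Q` of `P` above the vertex `v` of `Q`: the poset on
`X₁ ⊔ X₂` restricting to `P` on `X₁` and to `Q` on `X₂`, with `q ≤ p` for `q ∈ X₂`,
`p ∈ X₁` iff `q ≤_Q v`.  (Junk value when the carriers are not disjoint or `v ∉ Q`.) -/
noncomputable def graft (P Q : FinPoset α) (v : α) : FinPoset α :=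
  if h : Disjoint P.carrier Q.carrier ∧ v ∈ Q.carrier then P.graftAux Q v h.1 h.2 else P

/-- The set of subsets `I` of the carrier with `I ◎ P`. -/
noncomputable def circSet (P : FinPoset α) : Finset (Finset α) :=
  P.carrier.powerset.filter (fun I => P.Circ I)

/-- Order isomorphisms from `A` to `B`, encoded as maps `α → α` that are the identity
outside of the carrier of `A`. -/
def Isos (A B : FinPoset α) : Set (α → α) :=
  {f | Set.BijOn f ↑A.carrier ↑B.carrier ∧
    (∀ x ∈ A.carrier, ∀ y ∈ A.carrier, (A.le x y ↔ B.le (f x) (f y))) ∧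
    ∀ x, x ∉ A.carrier → f x = x}

/-- `⟨A, B⟩`: the number of order isomorphisms from `A` to `B`. -/
noncomputable def pairing (A B : FinPoset α) : ℕ := Nat.card ↥(Isos A B)

/-- The NAP coproduct `δ(P) = (1/|min(P)|) Σ_{I ◎ P} I ⊗ (P \ I)`, with values in the
rational vector space spanned by pairs of finite posets. -/
noncomputable def delta (P : FinPoset α) : (FinPoset α × FinPoset α) →₀ ℚ :=
  ((P.minSet.card : ℚ))⁻¹ • ∑ I ∈ P.circSet,
    Finsupp.single (P.restrict I, P.restrict (P.carrier \ I)) (1 : ℚ)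

end FinPoset

/-!
Since `I ◎ P` with `I_- = {w}`, the set `I` is an up-set, and the only element of `P \ I`
below an element of `I` is the minimal element `w`. Hence `P \ I` is a down-set, so passing
to it changes neither `J_-` nor which of its elements are minimal; and an element of `P \ I`
lying strictly above anything is not minimal, hence comparable with no element of `I`, so the
connected components containing `J` are the same in `P` and in `P \ I`.
-/

namespace FinPoset

variable {α : Type*} {P : FinPoset α}

theorem notMem_minSet_of_lt {v x : α} (h : P.lt v x) : x ∉ P.minSet := fun hx =>
  h.2 ((Finset.mem_filter.1 hx).2 v h.1)

theorem isCC_inter_iff {S T J : Set α} (hJ : J ⊆ S)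
    (hsep : ∀ x ∈ T, x ∈ S → ∀ y ∈ T, y ∉ S → ¬(P.le x y ∨ P.le y x)) :
    P.IsCC (T ∩ S) J ↔ P.IsCC T J := by
  constructor
  · rintro ⟨hne, hJT, hconn, hclosed⟩
    refine ⟨hne, hJT.trans Set.inter_subset_left, hconn, fun x hx y hy hxy => ?_⟩
    by_cases hyS : y ∈ S
    · exact hclosed x hx y ⟨hy, hyS⟩ hxy
    · exact absurd hxy (hsep x (hJT hx).1 (hJ hx) y hy hyS)
  · rintro ⟨hne, hJT, hconn, hclosed⟩
    exact ⟨hne, Set.subset_inter hJT hJ, hconn, fun x hx y hy => hclosed x hx y hy.1⟩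

variable [DecidableEq α]

theorem restrict_carrier {S : Finset α} : (P.restrict S).carrier = P.carrier ∩ S :=
  rfl

theorem restrict_le_iff {S : Finset α} {x y : α} :
    (P.restrict S).le x y ↔ P.le x y ∧ x ∈ S ∧ y ∈ S :=
  Iff.rfl

theorem restrict_comparable_iff {S : Finset α} {x y : α} (hx : x ∈ S) (hy : y ∈ S) :
    ((P.restrict S).le x y ∨ (P.restrict S).le y x) ↔ (P.le x y ∨ P.le y x) := by
  simp only [restrict_le_iff, hx, hy, and_true]

theorem connOn_restrict_iff {S : Finset α} {J : Set α} (hJ : J ⊆ S) :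
    (P.restrict S).ConnOn J ↔ P.ConnOn J := by
  have hrel :
      (fun a b => a ∈ J ∧ b ∈ J ∧ ((P.restrict S).le a b ∨ (P.restrict S).le b a)) =
        fun a b => a ∈ J ∧ b ∈ J ∧ (P.le a b ∨ P.le b a) := by
    ext a b
    exact and_congr_right fun ha => and_congr_right fun hb =>
      restrict_comparable_iff (hJ ha) (hJ hb)
  simp only [ConnOn, hrel]

theorem isCC_restrict_iff {S : Finset α} {T J : Set α} (hT : T ⊆ S) :
    (P.restrict S).IsCC T J ↔ P.IsCC T J := by
  refine and_congr_right fun _ => and_congr_right fun hJT => ?_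
  refine and_congr (connOn_restrict_iff (hJT.trans hT)) ?_
  refine forall₂_congr fun x hx => forall₂_congr fun y hy => ?_
  rw [restrict_comparable_iff (hT (hJT hx)) (hT hy)]

theorem setOf_restrict_lt {S : Finset α} {v : α} (hv : v ∈ S) :
    {x | x ∈ (P.restrict S).carrier ∧ (P.restrict S).lt v x} =
      {x | x ∈ P.carrier ∧ P.lt v x} ∩ ↑S := by
  ext x
  simp only [restrict_carrier, lt, restrict_le_iff, Set.mem_ofPred_eq, Set.mem_inter_iff,
    Finset.mem_inter, Finset.mem_coe, hv, true_and]
  tauto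

def IsDownSet (P : FinPoset α) (S : Finset α) : Prop :=
  ∀ ⦃x y⦄, P.le x y → y ∈ S → x ∈ S

section IsDownSet

variable {S : Finset α} (hS : P.IsDownSet S)
include hS

theorem IsDownSet.below_restrict {J : Finset α} (hJ : J ⊆ S) :
    (P.restrict S).below J = P.below J := by
  ext x
  simp only [below, restrict_carrier, restrict_le_iff, Finset.mem_filter, Finset.mem_sdiff,
    Finset.mem_inter]
  constructor
  · rintro ⟨⟨⟨hx, -⟩, hxJ⟩, y, hy, hxy, -⟩
    exact ⟨⟨hx, hxJ⟩, y, hy, hxy⟩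
  · rintro ⟨⟨hx, hxJ⟩, y, hy, hxy⟩
    have hxS := hS hxy (hJ hy)
    exact ⟨⟨⟨hx, hxS⟩, hxJ⟩, y, hy, hxy, hxS, hJ hy⟩

theorem IsDownSet.mem_of_mem_below {J : Finset α} (hJ : J ⊆ S) {v : α}
    (hv : v ∈ P.below J) : v ∈ S := by
  obtain ⟨-, y, hy, hvy⟩ := Finset.mem_filter.1 hv
  exact hS hvy (hJ hy)

theorem IsDownSet.mem_minSet_restrict_iff {v : α} (hv : v ∈ S) :
    v ∈ (P.restrict S).minSet ↔ v ∈ P.minSet := by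
  simp only [minSet, restrict_carrier, restrict_le_iff, Finset.mem_filter, Finset.mem_inter, hv,
    and_true]
  exact and_congr_right fun _ =>
    ⟨fun h y hyv => h y ⟨hyv, hS hyv hv⟩, fun h y hyv => h y hyv.1⟩

end IsDownSet

namespace Circ

variable {I : Finset α} (hI : P.Circ I)
include hI

theorem mem_of_le {x y : α} (hy : y ∈ I) (hyx : P.le y x) : x ∈ I := by
  obtain ⟨w, -, -, -, hIT, -, hclosed⟩ := hI
  obtain ⟨-, hwy, hwy'⟩ := hIT hy
  refine hclosed y hy x ⟨(P.mem_of_le hyx).2, P.le_trans hwy hyx, ?_⟩ (Or.inl hyx)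
  rintro rfl
  exact hwy' (P.le_antisymm hwy hyx)

theorem isDownSet_sdiff : P.IsDownSet (P.carrier \ I) := fun _ _ hxy hy =>
  Finset.mem_sdiff.2
    ⟨(P.mem_of_le hxy).1, fun hx => (Finset.mem_sdiff.1 hy).2 (hI.mem_of_le hx hxy)⟩

theorem mem_minSet_of_le {x y : α} (hx : x ∈ P.carrier \ I) (hy : y ∈ I) (hxy : P.le x y) :
    x ∈ P.minSet := by
  obtain ⟨w, hbelow, hw, -⟩ := hI
  have hxb : x ∈ P.below I := Finset.mem_filter.2 ⟨hx, y, hy, hxy⟩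
  rw [hbelow, Finset.mem_singleton] at hxb
  rwa [hxb]

theorem not_comparable {v x y : α} (hx : x ∈ P.carrier \ I) (hvx : P.lt v x) (hy : y ∈ I) :
    ¬(P.le x y ∨ P.le y x) := by
  rintro (hxy | hyx)
  · exact notMem_minSet_of_lt hvx (hI.mem_minSet_of_le hx hy hxy)
  · exact (Finset.mem_sdiff.1 hx).2 (hI.mem_of_le hy hyx)

end Circ

end FinPoset

theorem circ_sdiff_iff_general {α : Type*} [DecidableEq α] (P : FinPoset α)
    (I J : Finset α) (hIc : P.Circ I)
    (hJ : J ⊆ P.carrier \ I) :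
    (P.restrict (P.carrier \ I)).Circ J ↔ P.Circ J := by
  have hS := hIc.isDownSet_sdiff
  simp only [FinPoset.Circ, hS.below_restrict hJ]
  refine exists_congr fun v => and_congr_right fun hv => ?_
  have hvS : v ∈ P.carrier \ I := hS.mem_of_mem_below hJ (hv ▸ Finset.mem_singleton_self v)
  rw [hS.mem_minSet_restrict_iff hvS, FinPoset.setOf_restrict_lt hvS,
    FinPoset.isCC_restrict_iff Set.inter_subset_right,
    FinPoset.isCC_inter_iff hJ fun x hx hxS y hy hyS =>
      hIc.not_comparable hxS hx.2 (by simpa [hy.1] using hyS)]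

/-- If `P` is a finite connected poset, `I ◎ P` and `J ⊆ P \ I`, then
`J ◎ (P \ I)` (for the induced order) if and only if `J ◎ P`. -/
theorem circ_sdiff_iff {α : Type*} [DecidableEq α] (P : FinPoset α)
    (hP : P.Connected) (I J : Finset α) (hI : I ⊆ P.carrier) (hIc : P.Circ I)
    (hJ : J ⊆ P.carrier \ I) :
    (P.restrict (P.carrier \ I)).Circ J ↔ P.Circ J :=
  circ_sdiff_iff_general P I J hIc hJ
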